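/- Let ℓ ≥ 2. The map n ↦ f_n^ℓ = {F_n, F_{n+1}, …, F_{n+ℓ-1}} from (ℕ, |·|) to (X^ℓ, d^ℓ) is a (1,1)-quasi-isometric embedding: for all natural numbers m, n ≥ 1, |m - n| - 1 ≤ d^ℓ(f_m^ℓ, f_n^ℓ) ≤ |m - n| + 1. -/

import Mathlib

/-!
Consecutive Fibonacci numbers generate every Fibonacci number through the addition formula
`F_t = F_{t-k-1} F_k + F_{t-k} F_{k+1}` (with negative indices when `t ≤ k`), whose coefficients
satisfy `|F_{t-k-1}| + |F_{t-k}| ≤ F_{d+2}` whenever `k - d ≤ t ≤ k + d + 1`. With `d = |m - n|`,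
every element of `f_n^ℓ` is in this range for some consecutive pair in `f_m^ℓ`, so both `q`-values
are at most `F_{d+2} ≤ φ^{d+1}`. Conversely, all elements of `f_n^ℓ` are at most its largest one
`F_k`, so writing `F_{k+d} ∈ f_{n+d}^ℓ` costs at least `F_{k+d} / F_k ≥ F_{d+1} ≥ φ^{d-1}`.
-/

/-- `Q s m` is the minimum of `∑ |xᵢ|` over integer solutions of `m = ∑_{i ∈ s} i·xᵢ`. -/
noncomputable def Q (s : Finset ℕ) (m : ℕ) : ℕ :=
  sInf {t : ℕ | ∃ x : ℕ → ℤ, (m : ℤ) = ∑ i ∈ s, (i : ℤ) * x i ∧ t = ∑ i ∈ s, (x i).natAbs}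

/-- `QSet n m = max_{x ∈ m} Q n x`, i.e. `q_𝐧(𝐦)` for finite sets `𝐧, 𝐦 ⊆ ℕ`. -/
noncomputable def QSet (nset mset : Finset ℕ) : ℕ := mset.sup fun x => Q nset x

/-- `dL 𝐦 𝐧 = log_φ (max (q_𝐧(𝐦), q_𝐦(𝐧)))`, where `φ = (1+√5)/2`. -/
noncomputable def dL (mset nset : Finset ℕ) : ℝ :=
  Real.logb ((1 + Real.sqrt 5) / 2) (max (QSet nset mset) (QSet mset nset))

/-- `fibSet n ℓ = {F_n, F_{n+1}, …, F_{n+ℓ-1}}` as a set of natural numbers. -/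
def fibSet (n ℓ : ℕ) : Finset ℕ := (Finset.range ℓ).image fun i => Nat.fib (n + i)

open Finset Real

section

variable {s : Finset ℕ} {m : ℕ}

lemma exists_sum_mul_eq_add {a b : ℕ} (ha : a ∈ s) (hb : b ∈ s) (c₁ c₂ : ℤ) :
    ∃ x : ℕ → ℤ, ∑ i ∈ s, (i : ℤ) * x i = a * c₁ + b * c₂ ∧
      ∑ i ∈ s, (x i).natAbs ≤ c₁.natAbs + c₂.natAbs := by
  refine ⟨fun i => (if i = a then c₁ else 0) + (if i = b then c₂ else 0), ?_, ?_⟩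
  · simp only [mul_add, mul_ite, mul_zero, sum_add_distrib, sum_ite_eq', ha, hb, if_true]
  · calc ∑ i ∈ s, ((if i = a then c₁ else 0) + (if i = b then c₂ else 0)).natAbs
        ≤ ∑ i ∈ s, ((if i = a then c₁ else 0).natAbs + (if i = b then c₂ else 0).natAbs) :=
          sum_le_sum fun i _ => Int.natAbs_add_le _ _
      _ = c₁.natAbs + c₂.natAbs := by
          simp only [apply_ite Int.natAbs, Int.natAbs_zero, sum_add_distrib, sum_ite_eq', ha, hb,
            if_true]

lemma Q_le_sum_natAbs {x : ℕ → ℤ} (hx : (m : ℤ) = ∑ i ∈ s, (i : ℤ) * x i) :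
    Q s m ≤ ∑ i ∈ s, (x i).natAbs :=
  Nat.sInf_le ⟨x, hx, rfl⟩

lemma Q_le_natAbs_add_natAbs {a b : ℕ} (ha : a ∈ s) (hb : b ∈ s) {c₁ c₂ : ℤ}
    (h : (m : ℤ) = a * c₁ + b * c₂) : Q s m ≤ c₁.natAbs + c₂.natAbs := by
  obtain ⟨x, hx, hx_abs⟩ := exists_sum_mul_eq_add ha hb c₁ c₂
  exact (Q_le_sum_natAbs (hx ▸ h)).trans hx_abs

lemma exists_sum_mul_eq_of_coprime {a b : ℕ} (ha : a ∈ s) (hb : b ∈ s) (hab : a.Coprime b)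
    (m : ℕ) : ∃ x : ℕ → ℤ, (m : ℤ) = ∑ i ∈ s, (i : ℤ) * x i := by
  have hbezout : (a : ℤ) * a.gcdA b + b * a.gcdB b = 1 := by
    rw [← Nat.cast_one, ← hab, Nat.gcd_eq_gcd_ab]
  obtain ⟨x, hx, -⟩ := exists_sum_mul_eq_add ha hb (m * a.gcdA b) (m * a.gcdB b)
  exact ⟨x, by rw [hx]; linear_combination (-(m : ℤ)) * hbezout⟩

lemma exists_sum_natAbs_eq_Q (hm : ∃ x : ℕ → ℤ, (m : ℤ) = ∑ i ∈ s, (i : ℤ) * x i) :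
    ∃ x : ℕ → ℤ, (m : ℤ) = ∑ i ∈ s, (i : ℤ) * x i ∧ Q s m = ∑ i ∈ s, (x i).natAbs := by
  obtain ⟨x, hx⟩ := hm
  exact Nat.sInf_mem (s := {t | ∃ x : ℕ → ℤ,
    (m : ℤ) = ∑ i ∈ s, (i : ℤ) * x i ∧ t = ∑ i ∈ s, (x i).natAbs}) ⟨_, x, hx, rfl⟩

lemma le_mul_Q {M : ℕ} (hs : ∀ i ∈ s, i ≤ M)
    (hm : ∃ x : ℕ → ℤ, (m : ℤ) = ∑ i ∈ s, (i : ℤ) * x i) : m ≤ M * Q s m := by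
  obtain ⟨x, hx, hQ⟩ := exists_sum_natAbs_eq_Q hm
  rw [hQ, mul_sum]
  zify
  rw [hx]
  refine sum_le_sum fun i hi => ?_
  calc (i : ℤ) * x i ≤ i * |x i| := mul_le_mul_of_nonneg_left (le_abs_self _) (by positivity)
    _ ≤ M * |x i| := mul_le_mul_of_nonneg_right (by exact_mod_cast hs i hi) (abs_nonneg _)

end

lemma Int.natAbs_fib (z : ℤ) : (Int.fib z).natAbs = Nat.fib z.natAbs := by
  obtain ⟨n, rfl | rfl⟩ := z.eq_nat_or_neg <;> simp [Int.fib_neg_natCast, Int.natAbs_mul]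

lemma natAbs_fib_sub_one_add_natAbs_fib_le {u : ℤ} {e : ℕ} (h₁ : -(e : ℤ) ≤ u)
    (h₂ : u ≤ e + 1) : (Int.fib (u - 1)).natAbs + (Int.fib u).natAbs ≤ Nat.fib (e + 2) := by
  rw [Int.natAbs_fib, Int.natAbs_fib]
  rcases (show (u - 1).natAbs = u.natAbs + 1 ∧ u.natAbs ≤ e ∨
      u.natAbs = (u - 1).natAbs + 1 ∧ (u - 1).natAbs ≤ e by omega) with ⟨h, he⟩ | ⟨h, he⟩
  · rw [h, add_comm, ← Nat.fib_add_two]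
    exact Nat.fib_mono (by omega)
  · rw [h, ← Nat.fib_add_two]
    exact Nat.fib_mono (by omega)

lemma Q_fib_le_fib {s : Finset ℕ} {k t e : ℕ} (hk : Nat.fib k ∈ s) (hk₁ : Nat.fib (k + 1) ∈ s)
    (h₁ : k ≤ t + e) (h₂ : t ≤ k + e + 1) : Q s (Nat.fib t) ≤ Nat.fib (e + 2) := by
  have hadd := Int.fib_add (t - k) k
  simp only [sub_add_cancel, Int.fib_natCast] at hadd
  rw [mul_comm, mul_comm (Int.fib _)] at hadd
  exact (Q_le_natAbs_add_natAbs hk hk₁ hadd).trans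
    (natAbs_fib_sub_one_add_natAbs_fib_le (by omega) (by omega))

lemma mem_fibSet {n ℓ i : ℕ} (hi : i < ℓ) : Nat.fib (n + i) ∈ fibSet n ℓ :=
  mem_image.2 ⟨i, mem_range.2 hi, rfl⟩

lemma QSet_fibSet_le_fib {ℓ a b d : ℕ} (hℓ : 2 ≤ ℓ) (hab : a ≤ b + d) (hba : b ≤ a + d) :
    QSet (fibSet a ℓ) (fibSet b ℓ) ≤ Nat.fib (d + 2) := by
  refine Finset.sup_le fun v hv => ?_
  obtain ⟨i, hi, rfl⟩ := mem_image.1 hv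
  rw [mem_range] at hi
  have hj : min i (ℓ - 2) + 1 < ℓ := by omega
  exact Q_fib_le_fib (k := a + min i (ℓ - 2)) (mem_fibSet (by omega)) (mem_fibSet hj)
    (by omega) (by omega)

lemma fib_mul_fib_succ_le_fib_add (k d : ℕ) : Nat.fib k * Nat.fib (d + 1) ≤ Nat.fib (k + d) := by
  rcases d with _ | e
  · simp
  · calc Nat.fib k * Nat.fib (e + 2) = Nat.fib k * Nat.fib e + Nat.fib k * Nat.fib (e + 1) := by
          rw [Nat.fib_add_two, mul_add]
      _ ≤ Nat.fib k * Nat.fib e + Nat.fib (k + 1) * Nat.fib (e + 1) :=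
          Nat.add_le_add_left (Nat.mul_le_mul_right _ Nat.fib_le_fib_succ) _
      _ = Nat.fib (k + (e + 1)) := (Nat.fib_add k e).symm

lemma fib_succ_le_QSet_fibSet_add {ℓ : ℕ} (hℓ : 2 ≤ ℓ) (a d : ℕ) :
    Nat.fib (d + 1) ≤ QSet (fibSet a ℓ) (fibSet (a + d) ℓ) := by
  set k := a + (ℓ - 1) with hk_def
  have hsolvable := exists_sum_mul_eq_of_coprime
    (mem_fibSet (n := a) (ℓ := ℓ) (i := 0) (by omega)) (mem_fibSet (ℓ := ℓ) (i := 1) (by omega))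
    (Nat.fib_coprime_fib_succ a) (Nat.fib (k + d))
  have hle : ∀ v ∈ fibSet a ℓ, v ≤ Nat.fib k := by
    intro v hv
    obtain ⟨i, hi, rfl⟩ := mem_image.1 hv
    exact Nat.fib_mono (by rw [mem_range] at hi; omega)
  have htop : Nat.fib (k + d) ∈ fibSet (a + d) ℓ := by
    rw [show k + d = a + d + (ℓ - 1) by omega]
    exact mem_fibSet (by omega)
  have hk : 0 < Nat.fib k := Nat.fib_pos.2 (by omega)
  refine Nat.le_of_mul_le_mul_left ?_ hk
  calc Nat.fib k * Nat.fib (d + 1) ≤ Nat.fib (k + d) := fib_mul_fib_succ_le_fib_add k d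
    _ ≤ Nat.fib k * Q (fibSet a ℓ) (Nat.fib (k + d)) := le_mul_Q hle hsolvable
    _ ≤ Nat.fib k * QSet (fibSet a ℓ) (fibSet (a + d) ℓ) :=
        Nat.mul_le_mul_left _ (le_sup (f := Q (fibSet a ℓ)) htop)

lemma fib_succ_le_goldenRatio_pow (n : ℕ) : (Nat.fib (n + 1) : ℝ) ≤ goldenRatio ^ n := by
  have h := goldenRatio_mul_fib_succ_add_fib n
  have h₀ : (0 : ℝ) ≤ Nat.fib n := Nat.cast_nonneg _
  have h₁ : (0 : ℝ) ≤ Nat.fib (n + 1) := Nat.cast_nonneg _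
  rw [pow_succ] at h
  nlinarith [one_lt_goldenRatio, pow_pos goldenRatio_pos n]

lemma goldenRatio_pow_le_fib_add_two (n : ℕ) : goldenRatio ^ n ≤ Nat.fib (n + 2) := by
  have h := fib_succ_sub_goldenConj_mul_fib n
  have h₀ : (0 : ℝ) ≤ Nat.fib n := Nat.cast_nonneg _
  rw [Nat.fib_add_two, Nat.cast_add]
  nlinarith [neg_one_lt_goldenConj]

lemma logb_goldenRatio_mem_Icc {M d : ℕ} (hlow : Nat.fib (d + 1) ≤ M)
    (hup : M ≤ Nat.fib (d + 2)) :
    (d : ℝ) - 1 ≤ logb goldenRatio M ∧ logb goldenRatio M ≤ d + 1 := by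
  have hM : (0 : ℝ) < M := by exact_mod_cast (Nat.fib_pos.2 d.succ_pos).trans_le hlow
  have hlog_pow (j : ℕ) : logb goldenRatio (goldenRatio ^ j) = j := by
    rw [logb_pow, logb_self_eq_one one_lt_goldenRatio, mul_one]
  constructor
  · rcases d with _ | j
    · have : (0 : ℝ) ≤ logb goldenRatio M :=
        logb_nonneg one_lt_goldenRatio (by exact_mod_cast (Nat.fib_pos.2 one_pos).trans_le hlow)
      simp only [CharP.cast_eq_zero]
      linarith
    · have hpow : goldenRatio ^ j ≤ M :=
        (goldenRatio_pow_le_fib_add_two j).trans (by exact_mod_cast hlow)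
      have := logb_le_logb_of_le one_lt_goldenRatio (pow_pos goldenRatio_pos j) hpow
      rw [hlog_pow] at this
      push_cast
      linarith
  · have hpow : (M : ℝ) ≤ goldenRatio ^ (d + 1) :=
      (by exact_mod_cast hup : (M : ℝ) ≤ Nat.fib (d + 2)).trans (fib_succ_le_goldenRatio_pow _)
    have := logb_le_logb_of_le one_lt_goldenRatio hM hpow
    rw [hlog_pow] at this
    exact_mod_cast this

theorem stmt_19_general (ℓ : ℕ) (hℓ : 2 ≤ ℓ) (m n : ℕ) :
    |(m : ℝ) - n| - 1 ≤ dL (fibSet m ℓ) (fibSet n ℓ) ∧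
    dL (fibSet m ℓ) (fibSet n ℓ) ≤ |(m : ℝ) - n| + 1 := by
  set d := ((m : ℤ) - n).natAbs with hd_def
  have hd : |(m : ℝ) - n| = d := by
    rw [Nat.cast_natAbs]
    push_cast
    rfl
  have hlow : Nat.fib (d + 1) ≤
      max (QSet (fibSet n ℓ) (fibSet m ℓ)) (QSet (fibSet m ℓ) (fibSet n ℓ)) := by
    rcases le_total n m with h | h
    · obtain ⟨k, rfl⟩ := Nat.exists_eq_add_of_le h
      rw [show d = k by omega]
      exact le_max_of_le_left (fib_succ_le_QSet_fibSet_add hℓ n k)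
    · obtain ⟨k, rfl⟩ := Nat.exists_eq_add_of_le h
      rw [show d = k by omega]
      exact le_max_of_le_right (fib_succ_le_QSet_fibSet_add hℓ m k)
  have hup : max (QSet (fibSet n ℓ) (fibSet m ℓ)) (QSet (fibSet m ℓ) (fibSet n ℓ)) ≤
      Nat.fib (d + 2) :=
    max_le (QSet_fibSet_le_fib hℓ (by omega) (by omega))
      (QSet_fibSet_le_fib hℓ (by omega) (by omega))
  rw [hd, dL, ← Nat.cast_max]
  exact logb_goldenRatio_mem_Icc hlow hup

/-- For `ℓ ≥ 2`, the map `n ↦ f_n^ℓ = {F_n, …, F_{n+ℓ-1}}` is a (1,1)-quasi-isometric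
embedding of `(ℕ, |·|)` into `(𝒳^ℓ, d^ℓ)`: for all `m, n ≥ 1`,
`|m - n| - 1 ≤ d^ℓ(f_m^ℓ, f_n^ℓ) ≤ |m - n| + 1`. -/
theorem stmt_19 (ℓ : ℕ) (hℓ : 2 ≤ ℓ) (m n : ℕ) (hm : 1 ≤ m) (hn : 1 ≤ n) :
    |(m : ℝ) - n| - 1 ≤ dL (fibSet m ℓ) (fibSet n ℓ) ∧
    dL (fibSet m ℓ) (fibSet n ℓ) ≤ |(m : ℝ) - n| + 1 :=
  stmt_19_general ℓ hℓ m n
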